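/- arXiv:2410.12474 — 3 statements merged into one kernel-verified Lean document; each statement's English description precedes it below -/
import Mathlib

section
/- Under the same setup as the NCC lower bound, where Z = {z₁,…,zₙ} consists of unit vectors and all inner products ⟨z_i, z'⟩ (z' ∈ Z) are nonnegative, for any constant α with 0 ≤ α ≤ 1/(N_C |C_j|) for all j, the NCC loss satisfies L ≥ -(1/n) Σ_{i=1}^n ⟨z_i, c(i)⟩ + (α/n) Σ_{i=1}^n Σ_{z' ∈ Z} ⟨z_i, z'⟩. -/
open Finset

theorem stmt_4 {n N d : ℕ} (hn : 0 < n) (hN : 0 < N)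
    (z : Fin n → Fin d → ℝ) (y : Fin n → Fin N)
    (hunit : ∀ i, ∑ k, z i k ^ 2 = 1)
    (hcls : ∀ j, ∃ i, y i = j)
    (hpos : ∀ i i', 0 ≤ ∑ k, z i k * z i' k)
    (c : Fin N → Fin d → ℝ)
    (hc : ∀ j, c j = (((Finset.univ.filter (fun i => y i = j)).card : ℝ))⁻¹ •
        ∑ i ∈ Finset.univ.filter (fun i => y i = j), z i)
    (α : ℝ) (hα0 : 0 ≤ α)
    (hα : ∀ j, α ≤ 1 / ((N : ℝ) * ((Finset.univ.filter (fun i => y i = j)).card : ℝ))) :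
    -(1 / (n : ℝ)) * ∑ i, Real.log
        (Real.exp (∑ k, z i k * c (y i) k) / ∑ j, Real.exp (∑ k, z i k * c j k))
      ≥ -(1 / (n : ℝ)) * (∑ i, ∑ k, z i k * c (y i) k)
        + (α / (n : ℝ)) * ∑ i, ∑ i', (∑ k, z i k * z i' k) := by
  haveI : Nonempty (Fin N) := Fin.pos_iff_nonempty.mp hN
  have hSpos : ∀ i, (0:ℝ) < ∑ j, Real.exp (∑ k, z i k * c j k) := by
    intro i
    exact Finset.sum_pos (fun j _ => Real.exp_pos _) univ_nonempty
  have hNpos : (0:ℝ) < N := Nat.cast_pos.mpr hN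
  have hinv1 : (N:ℝ)⁻¹ ≤ 1 := by
    nlinarith [mul_inv_cancel₀ (ne_of_gt hNpos), inv_pos.mpr hNpos,
      show (1:ℝ) ≤ N from by exact_mod_cast hN]
  -- key per-i bound
  have key : ∀ i, Real.log (∑ j, Real.exp (∑ k, z i k * c j k))
      ≥ α * ∑ i', ∑ k, z i k * z i' k := by
    intro i
    have ha : ∀ j, (∑ k, z i k * c j k)
        = (((Finset.univ.filter (fun i' => y i' = j)).card : ℝ))⁻¹ *
          ∑ i' ∈ Finset.univ.filter (fun i' => y i' = j), ∑ k, z i k * z i' k := by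
      intro j
      rw [hc j]
      simp only [Pi.smul_apply, Finset.sum_apply, smul_eq_mul, Finset.mul_sum]
      rw [Finset.sum_comm]
      refine Finset.sum_congr rfl fun i' _ => Finset.sum_congr rfl fun k _ => by ring
    have hjen : Real.exp ((N:ℝ)⁻¹ * ∑ j, (∑ k, z i k * c j k))
        ≤ ∑ j, ((N:ℝ)⁻¹) * Real.exp (∑ k, z i k * c j k) := by
      have := convexOn_exp.map_sum_le (t := Finset.univ) (w := fun _ : Fin N => (N:ℝ)⁻¹)
        (p := fun j => ∑ k, z i k * c j k) (fun _ _ => by positivity)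
        (by simp [Finset.card_univ]; field_simp) (fun _ _ => Set.mem_univ _)
      simpa [smul_eq_mul, Finset.mul_sum] using this
    have h1 : (N:ℝ)⁻¹ * ∑ j, (∑ k, z i k * c j k)
        ≤ Real.log (∑ j, Real.exp (∑ k, z i k * c j k)) := by
      rw [← Real.log_exp ((N:ℝ)⁻¹ * ∑ j, (∑ k, z i k * c j k))]
      apply Real.log_le_log (Real.exp_pos _)
      refine hjen.trans (Finset.sum_le_sum fun j _ => ?_)
      have h := (Real.exp_pos (∑ k, z i k * c j k)).le
      nlinarith
    refine le_trans ?_ h1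
    have hfib : ∑ i', ∑ k, z i k * z i' k
        = ∑ j, ∑ i' ∈ Finset.univ.filter (fun i' => y i' = j), ∑ k, z i k * z i' k :=
      (Finset.sum_fiberwise Finset.univ y (fun i' => ∑ k, z i k * z i' k)).symm
    calc α * ∑ i', ∑ k, z i k * z i' k
        = ∑ j, α * ∑ i' ∈ Finset.univ.filter (fun i' => y i' = j), ∑ k, z i k * z i' k := by
          rw [hfib, Finset.mul_sum]
      _ ≤ ∑ j, (N:ℝ)⁻¹ * (∑ k, z i k * c j k) := by
          refine Finset.sum_le_sum fun j _ => ?_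
          rw [ha j]
          obtain ⟨i0, hi0⟩ := hcls j
          have hm : (0:ℝ) < ((Finset.univ.filter (fun i' => y i' = j)).card : ℝ) := by
            have : i0 ∈ Finset.univ.filter (fun i' => y i' = j) := by simp [hi0]
            exact_mod_cast Finset.card_pos.mpr ⟨i0, this⟩
          have hT : (0:ℝ) ≤ ∑ i' ∈ Finset.univ.filter (fun i' => y i' = j), ∑ k, z i k * z i' k :=
            Finset.sum_nonneg (fun i' _ => hpos i i')
          have hαj := hα j
          rw [one_div, mul_inv] at hαj
          calc α * ∑ i' ∈ Finset.univ.filter (fun i' => y i' = j), ∑ k, z i k * z i' k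
              ≤ ((N:ℝ)⁻¹ * (((Finset.univ.filter (fun i' => y i' = j)).card : ℝ))⁻¹) *
                ∑ i' ∈ Finset.univ.filter (fun i' => y i' = j), ∑ k, z i k * z i' k :=
                mul_le_mul_of_nonneg_right hαj hT
            _ = (N:ℝ)⁻¹ * ((((Finset.univ.filter (fun i' => y i' = j)).card : ℝ))⁻¹ *
                ∑ i' ∈ Finset.univ.filter (fun i' => y i' = j), ∑ k, z i k * z i' k) := by ring
      _ = (N:ℝ)⁻¹ * ∑ j, (∑ k, z i k * c j k) := (Finset.mul_sum _ _ _).symm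
  -- assemble
  have hlog : ∀ i, Real.log
      (Real.exp (∑ k, z i k * c (y i) k) / ∑ j, Real.exp (∑ k, z i k * c j k))
      = (∑ k, z i k * c (y i) k) - Real.log (∑ j, Real.exp (∑ k, z i k * c j k)) := by
    intro i
    rw [Real.log_div (Real.exp_ne_zero _) (ne_of_gt (hSpos i)), Real.log_exp]
  simp only [hlog]
  rw [Finset.sum_sub_distrib]
  have hsum : α * ∑ i, ∑ i', ∑ k, z i k * z i' k
      ≤ ∑ i, Real.log (∑ j, Real.exp (∑ k, z i k * c j k)) := by
    rw [Finset.mul_sum]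
    exact Finset.sum_le_sum (fun i _ => key i)
  have hninv : (0:ℝ) < 1 / n := by positivity
  have h2 := mul_le_mul_of_nonneg_left hsum (le_of_lt hninv)
  rw [ge_iff_le, mul_sub]
  have e2 : (α / (n:ℝ)) * ∑ i, ∑ i', ∑ k, z i k * z i' k
      = (1/(n:ℝ)) * (α * ∑ i, ∑ i', ∑ k, z i k * z i' k) := by ring
  linarith [h2, e2.ge, e2.le]
end

section
/- If √M · ‖Θ‖_F < 1, where M = max_{1≤j≤d} cos²(Δ_emb, Θ^j), then the representation gap is strictly smaller than the embedding gap: ‖Θ^T Δ_emb‖₂ < ‖Δ_emb‖₂ (assuming Δ_emb ≠ 0 and all columns of Θ nonzero). -/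
/-!
Each coordinate of `Δᵀ Θ` is an inner product `⟨Δ, Θʲ⟩`, whose square is
`cos²(Δ, Θʲ) ‖Δ‖² ‖Θʲ‖² ≤ M ‖Δ‖² ‖Θʲ‖²`. Summing over the columns gives
`‖Δᵀ Θ‖² ≤ M ‖Θ‖_F² ‖Δ‖² < ‖Δ‖²`.
-/

open Finset

/-- cosine of the angle between two vectors in `Fin d → ℝ`. -/
noncomputable def cosAngle {d : ℕ} (v w : Fin d → ℝ) : ℝ :=
  (∑ k, v k * w k) / (Real.sqrt (∑ k, v k ^ 2) * Real.sqrt (∑ k, w k ^ 2))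

/-- Also true when `v` or `w` vanishes (so `cosAngle v w = 0` by `x / 0 = 0`): both sides are then
`0`, the left one by Cauchy–Schwarz. -/
theorem sq_sum_mul_eq_cosAngle_sq_mul {d : ℕ} (v w : Fin d → ℝ) :
    (∑ k, v k * w k) ^ 2 = cosAngle v w ^ 2 * ((∑ k, v k ^ 2) * ∑ k, w k ^ 2) := by
  have hv : 0 ≤ ∑ k, v k ^ 2 := sum_nonneg fun _ _ => sq_nonneg _
  have hw : 0 ≤ ∑ k, w k ^ 2 := sum_nonneg fun _ _ => sq_nonneg _
  rw [cosAngle, div_pow, mul_pow, Real.sq_sqrt hv, Real.sq_sqrt hw]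
  rcases eq_or_ne ((∑ k, v k ^ 2) * ∑ k, w k ^ 2) 0 with h | h
  · have hcs := sum_mul_sq_le_sq_mul_sq univ v w
    rw [h] at hcs ⊢
    nlinarith [sq_nonneg (∑ k, v k * w k)]
  · rw [div_mul_cancel₀ _ h]

theorem sum_vecMul_sq_le {d : ℕ} {n : Type*} [Fintype n] (Θ : Matrix (Fin d) n ℝ)
    (Δ : Fin d → ℝ) {M : ℝ} (hM : ∀ j, cosAngle Δ (fun k => Θ k j) ^ 2 ≤ M) :
    ∑ j, Matrix.vecMul Δ Θ j ^ 2 ≤ M * (∑ k, Δ k ^ 2) * ∑ i, ∑ j, Θ i j ^ 2 := by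
  have hcol : ∀ j, Matrix.vecMul Δ Θ j ^ 2 ≤ M * (∑ k, Δ k ^ 2) * ∑ k, Θ k j ^ 2 := by
    intro j
    rw [Matrix.vecMul, dotProduct, sq_sum_mul_eq_cosAngle_sq_mul, ← mul_assoc]
    exact mul_le_mul_of_nonneg_right (mul_le_mul_of_nonneg_right (hM j)
      (sum_nonneg fun _ _ => sq_nonneg _)) (sum_nonneg fun _ _ => sq_nonneg _)
  calc ∑ j, Matrix.vecMul Δ Θ j ^ 2 ≤ ∑ j, M * (∑ k, Δ k ^ 2) * ∑ k, Θ k j ^ 2 :=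
        sum_le_sum fun j _ => hcol j
    _ = M * (∑ k, Δ k ^ 2) * ∑ i, ∑ j, Θ i j ^ 2 := by rw [← mul_sum, sum_comm]

theorem sum_sq_pos_of_ne_zero {ι : Type*} [Fintype ι] {v : ι → ℝ} (hv : v ≠ 0) :
    0 < ∑ k, v k ^ 2 := by
  obtain ⟨k, hk⟩ := Function.ne_iff.mp hv
  exact sum_pos' (fun _ _ => sq_nonneg _) ⟨k, mem_univ k, sq_pos_of_ne_zero hk⟩

theorem stmt_8_general {d : ℕ} (hne : (Finset.univ : Finset (Fin d)).Nonempty)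
    (Θ : Matrix (Fin d) (Fin d) ℝ) (Δemb : Fin d → ℝ)
    (hΔ0 : Δemb ≠ 0)
    (hM : Real.sqrt (Finset.univ.sup' hne (fun j => cosAngle Δemb (fun k => Θ k j) ^ 2)) *
        Real.sqrt (∑ i, ∑ k, Θ i k ^ 2) < 1) :
    Real.sqrt (∑ k, Matrix.vecMul Δemb Θ k ^ 2) < Real.sqrt (∑ k, Δemb k ^ 2) := by
  set M := Finset.univ.sup' hne (fun j => cosAngle Δemb (fun k => Θ k j) ^ 2)
  set F := ∑ i, ∑ k, Θ i k ^ 2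
  have hF : 0 ≤ F := sum_nonneg fun _ _ => sum_nonneg fun _ _ => sq_nonneg _
  have hMF : M * F < 1 := by
    rw [← Real.sqrt_mul' M hF, Real.sqrt_lt' one_pos] at hM
    simpa using hM
  have hA := sum_sq_pos_of_ne_zero hΔ0
  apply Real.sqrt_lt_sqrt (sum_nonneg fun _ _ => sq_nonneg _)
  calc ∑ k, Matrix.vecMul Δemb Θ k ^ 2 ≤ M * (∑ k, Δemb k ^ 2) * F :=
        sum_vecMul_sq_le Θ Δemb fun j =>
          le_sup' (fun j => cosAngle Δemb (fun k => Θ k j) ^ 2) (mem_univ j)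
    _ = M * F * ∑ k, Δemb k ^ 2 := by ring
    _ < ∑ k, Δemb k ^ 2 := mul_lt_of_lt_one_left hA hMF

theorem stmt_8 {d : ℕ} (hne : (Finset.univ : Finset (Fin d)).Nonempty)
    (Θ : Matrix (Fin d) (Fin d) ℝ) (Δemb : Fin d → ℝ)
    (hΔ0 : Δemb ≠ 0) (hcol : ∀ j, (fun k => Θ k j) ≠ 0)
    (hM : Real.sqrt (Finset.univ.sup' hne (fun j => cosAngle Δemb (fun k => Θ k j) ^ 2)) *
        Real.sqrt (∑ i, ∑ k, Θ i k ^ 2) < 1) :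
    Real.sqrt (∑ k, Matrix.vecMul Δemb Θ k ^ 2) < Real.sqrt (∑ k, Δemb k ^ 2) :=
  stmt_8_general hne Θ Δemb hΔ0 hM
end

section
/- Let z₁,…,zₙ ∈ ℝ^d and c₁,…,cₙ ∈ ℝ^d be unit vectors with c_i = p_k whenever i ∈ C_k for a partition {C_k}_{k=1}^{N_C} of {1,…,n} and prototypes p₁,…,p_{N_C}. Then the symmetric cross entropy loss L_SCE = −(1/n) Σ_i log( e^{⟨z_i,c_i⟩} / Σ_j e^{⟨z_i,c_j⟩} ) − (1/n) Σ_i log( e^{⟨c_i,z_i⟩} / Σ_j e^{⟨c_i,z_j⟩} ) satisfies L_SCE ≥ −(2/n) Σ_{i=1}^n ⟨z_i, c_i⟩ + (2/n) Σ_{i=1}^n Σ_{k=1}^{N_C} (|C_k|/n) ⟨z_i, p_k⟩. -/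
open Finset

lemma logsum_aux {n : ℕ} (hn : 0 < n) (a : Fin n → ℝ) :
    (∑ j, a j) / n ≤ Real.log (∑ j, Real.exp (a j)) := by
  have hn' : (0:ℝ) < n := Nat.cast_pos.mpr hn
  set m : ℝ := (∑ j, a j) / n with hm
  have hne : (Finset.univ : Finset (Fin n)).Nonempty := ⟨(⟨0, hn⟩ : Fin n), mem_univ _⟩
  have hpos : 0 < ∑ j, Real.exp (a j) :=
    Finset.sum_pos (fun j _ => Real.exp_pos _) hne
  rw [Real.le_log_iff_exp_le hpos]
  have h1 : ∀ j : Fin n, Real.exp m * (1 + (a j - m)) ≤ Real.exp (a j) := by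
    intro j
    have h := Real.add_one_le_exp (a j - m)
    have h2 := mul_le_mul_of_nonneg_left h (Real.exp_pos m).le
    calc Real.exp m * (1 + (a j - m)) = Real.exp m * ((a j - m) + 1) := by ring
      _ ≤ Real.exp m * Real.exp (a j - m) := h2
      _ = Real.exp (a j) := by rw [← Real.exp_add]; ring_nf
  have hsum : ∑ j : Fin n, Real.exp m * (1 + (a j - m)) = n * Real.exp m := by
    rw [← Finset.mul_sum]
    have h3 : ∑ j : Fin n, (1 + (a j - m)) = (n : ℝ) := by
      rw [Finset.sum_add_distrib, Finset.sum_sub_distrib, Finset.sum_const,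
        Finset.sum_const, Finset.card_univ, Fintype.card_fin, nsmul_eq_mul,
        nsmul_eq_mul, mul_one, hm]
      field_simp
      ring
    rw [h3]; ring
  calc Real.exp m ≤ (n : ℝ) * Real.exp m := by
        nlinarith [Real.exp_pos m, (Nat.one_le_cast (α := ℝ)).mpr hn]
    _ = ∑ j : Fin n, Real.exp m * (1 + (a j - m)) := hsum.symm
    _ ≤ ∑ j, Real.exp (a j) := Finset.sum_le_sum fun j _ => h1 j

theorem stmt_10 {n N d : ℕ} (hn : 0 < n) (hN : 0 < N)
    (z c : Fin n → Fin d → ℝ) (p : Fin N → Fin d → ℝ) (y : Fin n → Fin N)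
    (hzu : ∀ i, ∑ k, z i k ^ 2 = 1) (hcu : ∀ i, ∑ k, c i k ^ 2 = 1)
    (hcls : ∀ k, ∃ i, y i = k)
    (hcp : ∀ i, c i = p (y i)) :
    -(1 / (n : ℝ)) * (∑ i, Real.log
        (Real.exp (∑ l, z i l * c i l) / ∑ j, Real.exp (∑ l, z i l * c j l)))
      - (1 / (n : ℝ)) * (∑ i, Real.log
        (Real.exp (∑ l, c i l * z i l) / ∑ j, Real.exp (∑ l, c i l * z j l)))
      ≥ -(2 / (n : ℝ)) * (∑ i, ∑ l, z i l * c i l)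
        + (2 / (n : ℝ)) * ∑ i, ∑ k,
            (((Finset.univ.filter (fun i' => y i' = k)).card : ℝ) / (n : ℝ))
              * (∑ l, z i l * p k l) := by
  have hn' : (0:ℝ) < n := Nat.cast_pos.mpr hn
  have hne : (Finset.univ : Finset (Fin n)).Nonempty := ⟨(⟨0, hn⟩ : Fin n), mem_univ _⟩
  -- fiber identity
  have hfib : ∀ g : Fin N → ℝ, ∑ j, g (y j)
      = ∑ k, ((Finset.univ.filter (fun i' => y i' = k)).card : ℝ) * g k := by
    intro g
    rw [← Finset.sum_fiberwise' Finset.univ y g]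
    exact Finset.sum_congr rfl fun k _ => by rw [Finset.sum_const, nsmul_eq_mul]
  set T : ℝ := ∑ i, ∑ l, z i l * c i l with hT
  set L1 : ℝ := ∑ i, Real.log (∑ j, Real.exp (∑ l, z i l * c j l)) with hL1
  set L2 : ℝ := ∑ i, Real.log (∑ j, Real.exp (∑ l, c i l * z j l)) with hL2
  set R : ℝ := ∑ i, ∑ k,
      ((Finset.univ.filter (fun i' => y i' = k)).card : ℝ) * (∑ l, z i l * p k l) with hR
  have key1 : R / n ≤ L1 := by
    have h2 : R = ∑ i, ∑ j, ∑ l, z i l * c j l := by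
      rw [hR]
      refine Finset.sum_congr rfl fun i _ => ?_
      rw [← hfib (fun k => ∑ l, z i l * p k l)]
      exact Finset.sum_congr rfl fun j _ => by rw [hcp j]
    calc R / n = ∑ i, (∑ j, ∑ l, z i l * c j l) / n := by
          rw [h2, Finset.sum_div]
      _ ≤ L1 := Finset.sum_le_sum fun i _ => logsum_aux hn _
  have key2 : R / n ≤ L2 := by
    have h2 : (∑ i, ∑ j, ∑ l, c i l * z j l) = R := by
      rw [Finset.sum_comm, hR]
      refine Finset.sum_congr rfl fun j _ => ?_
      calc (∑ i, ∑ l, c i l * z j l)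
          = ∑ i, (fun k => ∑ l, z j l * p k l) (y i) :=
            Finset.sum_congr rfl fun i _ => by
              rw [hcp i]
              exact Finset.sum_congr rfl fun l _ => mul_comm _ _
        _ = ∑ k, ((Finset.univ.filter (fun i' => y i' = k)).card : ℝ)
              * ∑ l, z j l * p k l := hfib fun k => ∑ l, z j l * p k l
    calc R / n = ∑ i, (∑ j, ∑ l, c i l * z j l) / n := by
          rw [← h2, Finset.sum_div]
      _ ≤ L2 := Finset.sum_le_sum fun i _ => logsum_aux hn _
  -- rewrite the log of quotient terms
  have hrw1 : ∀ i : Fin n, Real.log (Real.exp (∑ l, z i l * c i l)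
        / ∑ j, Real.exp (∑ l, z i l * c j l))
      = (∑ l, z i l * c i l) - Real.log (∑ j, Real.exp (∑ l, z i l * c j l)) := by
    intro i
    rw [Real.log_div (Real.exp_ne_zero _)
      (ne_of_gt (Finset.sum_pos (fun _ _ => Real.exp_pos _) hne)), Real.log_exp]
  have hrw2 : ∀ i : Fin n, Real.log (Real.exp (∑ l, c i l * z i l)
        / ∑ j, Real.exp (∑ l, c i l * z j l))
      = (∑ l, z i l * c i l) - Real.log (∑ j, Real.exp (∑ l, c i l * z j l)) := by
    intro i
    rw [Real.log_div (Real.exp_ne_zero _)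
      (ne_of_gt (Finset.sum_pos (fun _ _ => Real.exp_pos _) hne)), Real.log_exp]
    congr 1
    exact Finset.sum_congr rfl fun l _ => mul_comm _ _
  have hlhs1 : (∑ i, Real.log (Real.exp (∑ l, z i l * c i l)
        / ∑ j, Real.exp (∑ l, z i l * c j l))) = T - L1 := by
    rw [hT, hL1, ← Finset.sum_sub_distrib]
    exact Finset.sum_congr rfl fun i _ => hrw1 i
  have hlhs2 : (∑ i, Real.log (Real.exp (∑ l, c i l * z i l)
        / ∑ j, Real.exp (∑ l, c i l * z j l))) = T - L2 := by
    rw [hT, hL2, ← Finset.sum_sub_distrib]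
    exact Finset.sum_congr rfl fun i _ => hrw2 i
  have hrhs : (∑ i, ∑ k, (((Finset.univ.filter (fun i' => y i' = k)).card : ℝ) / (n : ℝ))
      * (∑ l, z i l * p k l)) = R / n := by
    rw [hR, Finset.sum_div]
    refine Finset.sum_congr rfl fun i _ => ?_
    rw [Finset.sum_div]
    exact Finset.sum_congr rfl fun k _ => by rw [div_mul_eq_mul_div]
  rw [hlhs1, hlhs2, hrhs, ge_iff_le, ← sub_nonneg]
  have hu : (0:ℝ) ≤ 1 / n := by positivity
  have hexp : (-(1 / (n:ℝ)) * (T - L1) - 1 / n * (T - L2))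
      - (-(2 / (n:ℝ)) * T + 2 / n * (R / n))
      = (1/n) * (L1 - R/n) + (1/n) * (L2 - R/n) := by ring
  rw [hexp]
  have h1 := mul_nonneg hu (sub_nonneg.mpr key1)
  have h2 := mul_nonneg hu (sub_nonneg.mpr key2)
  linarith
end
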